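/- Let X be a random variable whose distribution is that of a Poisson(λ) random variable conditioned on being positive. Then X is stochastically dominated by 1 + Y where Y ~ Poisson(λ); i.e., for every k ∈ ℤ≥0, P(X ≥ k) ≤ P(1 + Y ≥ k). -/

import Mathlib

open scoped Nat

lemma pcps_exp_tsum (x : ℝ) : (∑' n : ℕ, x ^ n / n !) = Real.exp x := by
  rw [Real.exp_eq_exp_ℝ, NormedSpace.exp_eq_tsum_div]

/-- Let `X` be distributed as a `Poisson(λ)` random variable
conditioned on being positive, i.e. `P(X = k) = e^{-λ} λ^k / (k! (1 - e^{-λ}))`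
for `k ≥ 1` (and `P(X = 0) = 0`), where `λ > 0`.  Then `X` is stochastically
dominated by `1 + Y` with `Y ~ Poisson(λ)`: for every `k ∈ ℕ`,
`P(X ≥ k) ≤ P(1 + Y ≥ k)`. -/
theorem poisson_cond_pos_stoch_dom (lam : ℝ) (hlam : 0 < lam) (k : ℕ) :
    (∑' j : ℕ, if k ≤ j ∧ 1 ≤ j then
        Real.exp (-lam) * lam ^ j / (Nat.factorial j) / (1 - Real.exp (-lam)) else 0)
      ≤ ∑' j : ℕ, if k ≤ j + 1 then
        Real.exp (-lam) * lam ^ j / (Nat.factorial j) else 0 := by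
  set E := Real.exp (-lam) with hE
  have hE0 : 0 < E := Real.exp_pos _
  have hE1 : E < 1 := by
    rw [hE]; exact Real.exp_lt_one_iff.2 (by linarith)
  set f : ℕ → ℝ := fun j => E * lam ^ j / (Nat.factorial j) with hf
  have hfnn : ∀ j, 0 ≤ f j := fun j => by
    apply div_nonneg (mul_nonneg hE0.le (pow_nonneg hlam.le _)) (by positivity)
  have hsum : Summable f := by
    have := (Real.summable_pow_div_factorial lam).mul_left E
    refine this.congr fun j => ?_
    simp [hf, mul_div_assoc]
  have htail : ∀ m : ℕ, Summable fun i => f (m + i) := fun m =>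
    ((summable_nat_add_iff m).2 hsum).congr fun i => by rw [add_comm]
  -- shift lemma
  have hshift : ∀ m : ℕ, (∑' j : ℕ, if m ≤ j then f j else 0) = ∑' i : ℕ, f (m + i) := by
    intro m
    have hinj : Function.Injective (fun i : ℕ => m + i) := fun a b h =>
      Nat.add_left_cancel h
    have := hinj.tsum_eq (f := fun j : ℕ => if m ≤ j then f j else 0) ?_
    · rw [← this]
      refine tsum_congr fun i => ?_
      simp
    · intro x hx
      simp only [Function.mem_support, ne_eq, ite_eq_right_iff, not_forall] at hx
      obtain ⟨h, -⟩ := hx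
      exact ⟨x - m, by show m + (x - m) = x; omega⟩
  -- key bound: tail sum from m is at most lam^m / m!
  have hkey : ∀ m : ℕ, (∑' i : ℕ, f (m + i)) ≤ lam ^ m / m ! := by
    intro m
    have hg : Summable fun i : ℕ => E * lam ^ m / m ! * (lam ^ i / i !) :=
      (Real.summable_pow_div_factorial lam).mul_left _
    have hle : ∀ i : ℕ, f (m + i) ≤ E * lam ^ m / m ! * (lam ^ i / i !) := by
      intro i
      have hfac : (m ! * i ! : ℝ) ≤ ((m + i)! : ℝ) := by
        exact_mod_cast Nat.le_of_dvd (Nat.factorial_pos _)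
          (Nat.factorial_mul_factorial_dvd_factorial_add m i)
      have hfacpos : (0:ℝ) < (m ! : ℝ) * i ! := by positivity
      have h1 : (1:ℝ) / ((m + i)! : ℝ) ≤ 1 / ((m ! : ℝ) * i !) := by
        apply one_div_le_one_div_of_le hfacpos hfac
      have hnum : 0 ≤ E * lam ^ (m + i) := by positivity
      calc f (m + i) = E * lam ^ (m + i) * (1 / ((m + i)! : ℝ)) := by
            rw [hf]; ring
        _ ≤ E * lam ^ (m + i) * (1 / ((m ! : ℝ) * i !)) := by
            exact mul_le_mul_of_nonneg_left h1 hnum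
        _ = E * lam ^ m / m ! * (lam ^ i / i !) := by
            rw [pow_add]; field_simp
    calc (∑' i : ℕ, f (m + i)) ≤ ∑' i : ℕ, E * lam ^ m / m ! * (lam ^ i / i !) :=
          Summable.tsum_le_tsum hle (htail m) hg
      _ = E * lam ^ m / m ! * Real.exp lam := by
          rw [tsum_mul_left, pcps_exp_tsum]
      _ = lam ^ m / m ! := by
          have h10 : Real.exp (-lam) * Real.exp lam = 1 := by
            rw [← Real.exp_add]; simp
          rw [hE]
          field_simp
          linear_combination h10
  -- recurrence
  have hrec : ∀ m : ℕ, (∑' i : ℕ, f (m + i)) = f m + ∑' i : ℕ, f (m + 1 + i) := by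
    intro m
    rw [Summable.tsum_eq_zero_add (htail m)]
    exact congrArg₂ (· + ·) (congrArg f (Nat.add_zero m))
      (tsum_congr fun i => congrArg f (by omega))
  set m := k - 1 with hm
  set c := 1 - E with hc
  have hc0 : 0 < c := by simp [hc]; linarith
  -- rewrite LHS
  have hL : (∑' j : ℕ, if k ≤ j ∧ 1 ≤ j then f j / c else 0)
      = (∑' i : ℕ, f (m + 1 + i)) / c := by
    rw [← hshift (m + 1), ← tsum_div_const]
    refine tsum_congr fun j => ?_
    by_cases h : m + 1 ≤ j
    · rw [if_pos (by omega : k ≤ j ∧ 1 ≤ j), if_pos h]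
    · rw [if_neg (by omega : ¬(k ≤ j ∧ 1 ≤ j)), if_neg h, zero_div]
  have hR : (∑' j : ℕ, if k ≤ j + 1 then f j else 0) = ∑' i : ℕ, f (m + i) := by
    rw [← hshift m]
    refine tsum_congr fun j => ?_
    by_cases h : m ≤ j
    · rw [if_pos (by omega : k ≤ j + 1), if_pos h]
    · rw [if_neg (by omega : ¬ k ≤ j + 1), if_neg h]
  show (∑' j : ℕ, if k ≤ j ∧ 1 ≤ j then f j / c else 0)
      ≤ ∑' j : ℕ, if k ≤ j + 1 then f j else 0
  rw [hL, hR, hrec m, div_le_iff₀ hc0]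
  set T := ∑' i : ℕ, f (m + 1 + i) with hT
  have h1 : f m + T ≤ lam ^ m / m ! := by rw [← hrec m]; exact hkey m
  have h2 : f m = E * (lam ^ m / m !) := by rw [hf]; ring
  have hLnn : 0 ≤ lam ^ m / (m ! : ℝ) := by positivity
  nlinarith [hE0, hE1, hLnn, h1]
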